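/- arXiv:1304.3640 — 2 statements merged into one kernel-verified Lean document; each statement's English description precedes it below -/
import Mathlib

section
/- Let q*, p_s ∈ (0,1)^N with q* ⪯ p_s, and let C(q) be the symmetric matrix with diagonal 2 and off-diagonal entries c_{ij}(q) = -(a_{ij} q_i/(1-q_j) + a_{ji} q_j/(1-q_i)) ≤ 0. If C(q*) is not positive definite, then C(p_s) is not positive definite. (Hence if the least fixed point is not stable, neither is any larger fixed point.) -/
/-!
The off-diagonal entries of `C(q)` are nonpositive and decrease as `q` grows, while the diagonal
stays `2`. For a matrix with nonpositive off-diagonal entries, replacing `x` by `|x|` can only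
lower the quadratic form, so `|x|ᵀ C(p_s) |x| ≤ xᵀ C(q*) x`: a vector witnessing that `C(q*)` is
not positive definite yields one for `C(p_s)`.
-/

/-- The matrix C(q) = -(J(q) + J(q)^T): diagonal entries 2, off-diagonal entries
-(a i j * q i / (1 - q j) + a j i * q j / (1 - q i)). -/
noncomputable def alohaC {N : ℕ} (a : Fin N → Fin N → ℝ) (q : Fin N → ℝ) :
    Matrix (Fin N) (Fin N) ℝ :=
  Matrix.of fun i j =>
    if i = j then 2
    else -(a i j * q i / (1 - q j) + a j i * q j / (1 - q i))

namespace Matrix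

variable {n : Type*} [Fintype n]

theorem abs_dotProduct_mulVec_abs_le {A B : Matrix n n ℝ} (hBA : ∀ i j, B i j ≤ A i j)
    (hA : ∀ i j, i ≠ j → A i j ≤ 0) (x : n → ℝ) :
    |x| ⬝ᵥ (B *ᵥ |x|) ≤ x ⬝ᵥ (A *ᵥ x) := by
  simp only [dotProduct, mulVec, Pi.abs_apply, Finset.mul_sum]
  refine Finset.sum_le_sum fun i _ ↦ Finset.sum_le_sum fun j _ ↦ ?_
  rcases eq_or_ne i j with rfl | hij
  · calc |x i| * (B i i * |x i|) = B i i * (x i * x i) := by rw [← abs_mul_abs_self (x i)]; ring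
      _ ≤ A i i * (x i * x i) := mul_le_mul_of_nonneg_right (hBA i i) (mul_self_nonneg _)
      _ = x i * (A i i * x i) := by ring
  · calc |x i| * (B i j * |x j|) = B i j * |x i * x j| := by rw [abs_mul]; ring
      _ ≤ A i j * |x i * x j| := mul_le_mul_of_nonneg_right (hBA i j) (abs_nonneg _)
      _ ≤ A i j * (x i * x j) := mul_le_mul_of_nonpos_left (le_abs_self _) (hA i j hij)
      _ = x i * (A i j * x j) := by ring

theorem PosDef.of_le_of_offDiag_nonpos {A B : Matrix n n ℝ} (hB : B.PosDef) (hA : A.IsHermitian)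
    (hBA : ∀ i j, B i j ≤ A i j) (hA0 : ∀ i j, i ≠ j → A i j ≤ 0) : A.PosDef := by
  refine PosDef.of_dotProduct_mulVec_pos hA fun x hx ↦ ?_
  have hx' : |x| ≠ 0 := fun h ↦ hx ((Pi.abs_eq_zero x).mp h)
  simpa only [star_trivial] using
    (hB.dotProduct_mulVec_pos hx').trans_le (abs_dotProduct_mulVec_abs_le hBA hA0 x)

end Matrix

section

variable {N : ℕ} {a : Fin N → Fin N → ℝ}

lemma alohaC_apply_of_ne (q : Fin N → ℝ) {i j : Fin N} (hij : i ≠ j) :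
    alohaC a q i j = -(a i j * q i / (1 - q j) + a j i * q j / (1 - q i)) := by
  simp [alohaC, hij]

lemma alohaC_isHermitian (q : Fin N → ℝ) : (alohaC a q).IsHermitian := by
  ext i j
  rcases eq_or_ne i j with rfl | hij
  · rfl
  · simp only [Matrix.conjTranspose_apply, star_trivial, alohaC_apply_of_ne q hij,
      alohaC_apply_of_ne q hij.symm]
    ring

lemma alohaC_apply_nonpos (ha : ∀ i j, 0 ≤ a i j) {q : Fin N → ℝ} (hq : 0 ≤ q)
    (hq1 : ∀ i, q i < 1) {i j : Fin N} (hij : i ≠ j) : alohaC a q i j ≤ 0 := by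
  have term_nonneg (k l : Fin N) : 0 ≤ a k l * q k / (1 - q l) :=
    div_nonneg (mul_nonneg (ha k l) (hq k)) (sub_nonneg.mpr (hq1 l).le)
  rw [alohaC_apply_of_ne q hij, neg_nonpos]
  exact add_nonneg (term_nonneg i j) (term_nonneg j i)

lemma alohaC_apply_le_of_le (ha : ∀ i j, 0 ≤ a i j) {p q : Fin N → ℝ} (hq : 0 ≤ q)
    (hqp : q ≤ p) (hp1 : ∀ i, p i < 1) (i j : Fin N) : alohaC a p i j ≤ alohaC a q i j := by
  have term_le (k l : Fin N) : a k l * q k / (1 - q l) ≤ a k l * p k / (1 - p l) :=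
    div_le_div₀ (mul_nonneg (ha k l) ((hq k).trans (hqp k)))
      (mul_le_mul_of_nonneg_left (hqp k) (ha k l)) (sub_pos.mpr (hp1 l))
      (sub_le_sub_left (hqp l) 1)
  rcases eq_or_ne i j with rfl | hij
  · simp [alohaC]
  · rw [alohaC_apply_of_ne p hij, alohaC_apply_of_ne q hij, neg_le_neg_iff]
    exact add_le_add (term_le i j) (term_le j i)

end

theorem alohaC_not_posDef_mono_general {N : ℕ} (a : Fin N → Fin N → ℝ)
    (qstar ps : Fin N → ℝ) (ha : ∀ i j, a i j = 0 ∨ a i j = 1)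
    (hq : ∀ i, qstar i ∈ Set.Ioo (0:ℝ) 1) (hp : ∀ i, ps i ∈ Set.Ioo (0:ℝ) 1)
    (hle : qstar ≤ ps)
    (hnot : ¬ (alohaC a qstar).PosDef) :
    ¬ (alohaC a ps).PosDef := by
  have ha0 (i j : Fin N) : 0 ≤ a i j := by rcases ha i j with h | h <;> simp [h]
  have hq0 : 0 ≤ qstar := fun i ↦ (hq i).1.le
  have hp1 (i : Fin N) : ps i < 1 := (hp i).2
  exact fun hps ↦ hnot <| hps.of_le_of_offDiag_nonpos (alohaC_isHermitian qstar)
    (alohaC_apply_le_of_le ha0 hq0 hle hp1)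
    fun _ _ ↦ alohaC_apply_nonpos ha0 hq0 fun i ↦ (hle i).trans_lt (hp1 i)

/-- for qstar ⪯ ps in (0,1)^N, if C(qstar) is not positive definite
then neither is C(ps); hence if the least fixed point is not stable, neither is
any larger fixed point. -/
theorem alohaC_not_posDef_mono {N : ℕ} (a : Fin N → Fin N → ℝ)
    (qstar ps : Fin N → ℝ) (ha : ∀ i j, a i j = 0 ∨ a i j = 1)
    (hdiag : ∀ i, a i i = 0)
    (hq : ∀ i, qstar i ∈ Set.Ioo (0:ℝ) 1) (hp : ∀ i, ps i ∈ Set.Ioo (0:ℝ) 1)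
    (hle : qstar ≤ ps)
    (hnot : ¬ (alohaC a qstar).PosDef) :
    ¬ (alohaC a ps).PosDef :=
  alohaC_not_posDef_mono_general a qstar ps ha hq hp hle hnot
end

section
/- In the three-player chain topology with y_1 = y_3 = y fixed and y_2 varying, a fixed point q = (q_1, q_2, q_1) ∈ (0,1)^3 exists if and only if y_2 ≤ max_{q_2 ∈ [0,1-y]} q_2 (1 - y/(1-q_2))^2; in particular, the set of achievable y_2 is a closed interval [0, y_2^max] and at the critical value the two branches of fixed points coincide. -/
/-!
Eliminating `q₁ = y / (1 - q₂)` turns a fixed point into a root of `h q₂ = y₂`, where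
`h = chainProfile y`, with `q₂ ∈ (0, 1 - y)`. As `h` vanishes at both ends of `[0, 1 - y]`, a positive value of `h` on the
closed interval is attained in its interior; and `h` is continuous and nonnegative there, so by the
intermediate value theorem its image is exactly `[0, max h]`.
-/

open Set

noncomputable def chainProfile (y t : ℝ) : ℝ := t * (1 - y / (1 - t)) ^ 2

section ChainProfile

variable {y : ℝ}

@[simp]
lemma chainProfile_zero : chainProfile y 0 = 0 := by
  simp [chainProfile]

lemma chainProfile_one_sub_self (hy : y ≠ 0) : chainProfile y (1 - y) = 0 := by
  simp [chainProfile, hy]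

lemma chainProfile_nonneg {t : ℝ} (ht : 0 ≤ t) : 0 ≤ chainProfile y t :=
  mul_nonneg ht (sq_nonneg _)

lemma continuousOn_chainProfile (hy : 0 < y) : ContinuousOn (chainProfile y) (Icc 0 (1 - y)) := by
  refine continuousOn_id.mul ((continuousOn_const.sub (continuousOn_const.div
    (continuousOn_const.sub continuousOn_id) fun t ht => ?_)).pow 2)
  exact sub_ne_zero.2 fun h => by simp only [id] at h; linarith [ht.2]

lemma image_chainProfile_eq_Icc (hy : 0 < y) {M : ℝ}
    (hM : IsGreatest (chainProfile y '' Icc 0 (1 - y)) M) :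
    chainProfile y '' Icc 0 (1 - y) = Icc 0 M := by
  refine Subset.antisymm ?_ ?_
  · rintro _ ⟨t, ht, rfl⟩
    exact ⟨chainProfile_nonneg ht.1, hM.2 ⟨t, ht, rfl⟩⟩
  obtain ⟨t, ht, -⟩ := hM.1
  have hzero : (0 : ℝ) ∈ chainProfile y '' Icc 0 (1 - y) :=
    ⟨0, ⟨le_rfl, ht.1.trans ht.2⟩, chainProfile_zero⟩
  exact (isPreconnected_Icc.image _ (continuousOn_chainProfile hy)).Icc_subset hzero hM.1

lemma chainProfile_eq_of_rate_eq {q₁ q₂ : ℝ} (hq₂ : q₂ < 1) (h : y = q₁ * (1 - q₂)) :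
    chainProfile y q₂ = q₂ * (1 - q₁) ^ 2 := by
  have : 1 - q₂ ≠ 0 := by linarith
  rw [chainProfile, h, mul_div_cancel_right₀ _ this]

lemma exists_fixedPoint_iff_mem_image (hy : 0 < y) {y₂ : ℝ} (hy₂ : 0 < y₂) :
    (∃ q₁ q₂ : ℝ, q₁ ∈ Ioo (0 : ℝ) 1 ∧ q₂ ∈ Ioo (0 : ℝ) 1 ∧
      y = q₁ * (1 - q₂) ∧ y₂ = q₂ * (1 - q₁) ^ 2) ↔ y₂ ∈ chainProfile y '' Icc 0 (1 - y) := by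
  constructor
  · rintro ⟨q₁, q₂, ⟨-, hq₁⟩, ⟨hq₂, hq₂'⟩, hy_eq, hy₂_eq⟩
    refine ⟨q₂, ⟨hq₂.le, ?_⟩, (chainProfile_eq_of_rate_eq hq₂' hy_eq).trans hy₂_eq.symm⟩
    nlinarith
  · rintro ⟨t, ⟨ht₀, ht₁⟩, rfl⟩
    have ht_pos : 0 < t := ht₀.lt_of_ne <| by rintro rfl; simp at hy₂
    have ht_lt : t < 1 - y := ht₁.lt_of_ne <| by
      rintro rfl; simp [chainProfile_one_sub_self hy.ne'] at hy₂
    have h1t : 0 < 1 - t := by linarith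
    have hy_eq : y = y / (1 - t) * (1 - t) := (div_mul_cancel₀ y h1t.ne').symm
    refine ⟨y / (1 - t), t, ⟨by positivity, (div_lt_one h1t).2 (by linarith)⟩,
      ⟨ht_pos, by linarith⟩, hy_eq, chainProfile_eq_of_rate_eq (by linarith) hy_eq⟩

end ChainProfile

/-- three-player chain with y1 = y3 = y fixed and y2 varying. Let M
be the maximum of h(t) = t*(1 - y/(1-t))^2 over t ∈ [0, 1-y]. Then a symmetric
fixed point (q1, q2, q1) ∈ (0,1)^3 of the rate equations exists iff y2 ≤ M. -/
theorem chain_fold_bifurcation (y y2 M : ℝ)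
    (hy : y ∈ Set.Ioo (0:ℝ) 1) (hy2 : 0 < y2)
    (hM : IsGreatest ((fun t => t * (1 - y / (1 - t))^2) '' Set.Icc (0:ℝ) (1 - y)) M) :
    (∃ q1 q2 : ℝ, q1 ∈ Set.Ioo (0:ℝ) 1 ∧ q2 ∈ Set.Ioo (0:ℝ) 1 ∧
      y = q1 * (1 - q2) ∧ y2 = q2 * (1 - q1)^2) ↔ y2 ≤ M := by
  change IsGreatest (chainProfile y '' Icc 0 (1 - y)) M at hM
  rw [exists_fixedPoint_iff_mem_image hy.1 hy2, image_chainProfile_eq_Icc hy.1 hM]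
  exact ⟨fun h => h.2, fun h => ⟨hy2.le, h⟩⟩
end
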